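/- arXiv:solv-int/9506003 — 5 statements merged into one kernel-verified Lean document; each statement's English description precedes it below -/
import Mathlib

section
/- Let L be an invertible 2n×2n complex matrix written in 2×2 block form with n×n blocks A, B, C, D, and let A', B', C', D' be the corresponding blocks of L⁻¹ (in the same positions). Then for all complex numbers u and v: det(u·A' + B' − u·v·C' − v·D') = 0 if and only if det(v·A + B − u·v·C − u·D) = 0. (That is, the vacuum curve of L⁻¹ is obtained from the vacuum curve of L by interchanging the roles of u and v.) -/
open Matrix

theorem stmt2 {n : ℕ} (L : Matrix (Fin n ⊕ Fin n) (Fin n ⊕ Fin n) ℂ)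
    (hL : IsUnit L) (u v : ℂ) :
    (u • (L⁻¹).toBlocks₁₁ + (L⁻¹).toBlocks₁₂ - (u * v) • (L⁻¹).toBlocks₂₁
        - v • (L⁻¹).toBlocks₂₂).det = 0 ↔
    (v • L.toBlocks₁₁ + L.toBlocks₁₂ - (u * v) • L.toBlocks₂₁
        - u • L.toBlocks₂₂).det = 0 := by
  set A := L.toBlocks₁₁ with hA
  set B := L.toBlocks₁₂ with hB
  set C := L.toBlocks₂₁ with hC
  set D := L.toBlocks₂₂ with hD
  set A' := (L⁻¹).toBlocks₁₁ with hA'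
  set B' := (L⁻¹).toBlocks₁₂ with hB'
  set C' := (L⁻¹).toBlocks₂₁ with hC'
  set D' := (L⁻¹).toBlocks₂₂ with hD'
  have hdet : IsUnit L.det := (Matrix.isUnit_iff_isUnit_det L).mp hL
  have hLinv : L * L⁻¹ = 1 := Matrix.mul_nonsing_inv L hdet
  have hinvL : L⁻¹ * L = 1 := Matrix.nonsing_inv_mul L hdet
  have hLblocks : fromBlocks A B C D = L := Matrix.fromBlocks_toBlocks L
  have hLiblocks : fromBlocks A' B' C' D' = L⁻¹ := Matrix.fromBlocks_toBlocks L⁻¹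
  have hmulL : ∀ a b : Fin n → ℂ,
      L *ᵥ Sum.elim a b = Sum.elim (A *ᵥ a + B *ᵥ b) (C *ᵥ a + D *ᵥ b) := by
    intro a b
    rw [← hLblocks, Matrix.fromBlocks_mulVec]
    simp
  have hmulLi : ∀ a b : Fin n → ℂ,
      L⁻¹ *ᵥ Sum.elim a b = Sum.elim (A' *ᵥ a + B' *ᵥ b) (C' *ᵥ a + D' *ᵥ b) := by
    intro a b
    rw [← hLiblocks, Matrix.fromBlocks_mulVec]
    simp
  rw [← Matrix.exists_mulVec_eq_zero_iff, ← Matrix.exists_mulVec_eq_zero_iff]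
  constructor
  · rintro ⟨x, hx, hMx⟩
    have hMx' : u • (A' *ᵥ x) + B' *ᵥ x - (u * v) • (C' *ᵥ x) - v • (D' *ᵥ x) = 0 := by
      rw [← hMx]
      simp [Matrix.sub_mulVec, Matrix.add_mulVec, Matrix.smul_mulVec]
    set q : Fin n → ℂ := u • (C' *ᵥ x) + D' *ᵥ x with hq
    have hpq : u • (A' *ᵥ x) + B' *ᵥ x = v • q := by
      rw [hq]
      have h : u • (A' *ᵥ x) + B' *ᵥ x
          = (u * v) • (C' *ᵥ x) + v • (D' *ᵥ x) := by
        rw [← sub_eq_zero, ← hMx']; module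
      rw [h]; module
    have hz : L⁻¹ *ᵥ Sum.elim (u • x) x = Sum.elim (v • q) q := by
      rw [hmulLi, Matrix.mulVec_smul, Matrix.mulVec_smul, hpq, hq]
    have hLz : L *ᵥ Sum.elim (v • q) q = Sum.elim (u • x) x := by
      rw [← hz, Matrix.mulVec_mulVec, hLinv, Matrix.one_mulVec]
    rw [hmulL, Matrix.mulVec_smul, Matrix.mulVec_smul] at hLz
    have h1 : v • (A *ᵥ q) + B *ᵥ q = u • x := by
      funext i; exact congrFun hLz (Sum.inl i)
    have h2 : v • (C *ᵥ q) + D *ᵥ q = x := by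
      funext i; exact congrFun hLz (Sum.inr i)
    refine ⟨q, ?_, ?_⟩
    · intro hq0
      apply hx
      rw [← h2, hq0]
      simp
    · have h : (v • A + B - (u * v) • C - u • D) *ᵥ q
          = v • (A *ᵥ q) + B *ᵥ q - (u * v) • (C *ᵥ q) - u • (D *ᵥ q) := by
        simp [Matrix.sub_mulVec, Matrix.add_mulVec, Matrix.smul_mulVec]
      rw [h, h1, ← h2]; module
  · rintro ⟨q, hq0, hMq⟩
    have hMq' : v • (A *ᵥ q) + B *ᵥ q - (u * v) • (C *ᵥ q) - u • (D *ᵥ q) = 0 := by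
      rw [← hMq]
      simp [Matrix.sub_mulVec, Matrix.add_mulVec, Matrix.smul_mulVec]
    set x : Fin n → ℂ := v • (C *ᵥ q) + D *ᵥ q with hxdef
    have hux : v • (A *ᵥ q) + B *ᵥ q = u • x := by
      rw [hxdef]
      have h : v • (A *ᵥ q) + B *ᵥ q = (u * v) • (C *ᵥ q) + u • (D *ᵥ q) := by
        rw [← sub_eq_zero, ← hMq']; module
      rw [h]; module
    have hLz : L *ᵥ Sum.elim (v • q) q = Sum.elim (u • x) x := by
      rw [hmulL, Matrix.mulVec_smul, Matrix.mulVec_smul, hux, hxdef]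
    have hz : L⁻¹ *ᵥ Sum.elim (u • x) x = Sum.elim (v • q) q := by
      rw [← hLz, Matrix.mulVec_mulVec, hinvL, Matrix.one_mulVec]
    rw [hmulLi, Matrix.mulVec_smul, Matrix.mulVec_smul] at hz
    have h1 : u • (A' *ᵥ x) + B' *ᵥ x = v • q := by
      funext i; exact congrFun hz (Sum.inl i)
    have h2 : u • (C' *ᵥ x) + D' *ᵥ x = q := by
      funext i; exact congrFun hz (Sum.inr i)
    refine ⟨x, ?_, ?_⟩
    · intro hx0
      apply hq0
      rw [← h2, hx0]
      simp
    · have h : (u • A' + B' - (u * v) • C' - v • D') *ᵥ x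
          = u • (A' *ᵥ x) + B' *ᵥ x - (u * v) • (C' *ᵥ x) - v • (D' *ᵥ x) := by
        simp [Matrix.sub_mulVec, Matrix.add_mulVec, Matrix.smul_mulVec]
      rw [h, h1, ← h2]; module
end

section
/- Let a, b, c, d be nonzero complex numbers with a·d − b·c ≠ 0, and set Ω = a⁻¹·c·d⁻¹·b. Then Ω ≠ 0 and Ω ≠ 1, and the transformation formulas of the dynamical system can be rewritten as follows: d·(ad−bc)⁻¹ = a⁻¹·(1−Ω)⁻¹, −c·(ad−bc)⁻¹ = b⁻¹·(1−Ω⁻¹)⁻¹, −b·(ad−bc)⁻¹ = c⁻¹·(1−Ω⁻¹)⁻¹, and a·(ad−bc)⁻¹ = d⁻¹·(1−Ω)⁻¹. Moreover, setting a' = d·(ad−bc)⁻¹, b' = −c·(ad−bc)⁻¹, c' = −b·(ad−bc)⁻¹, d' = a·(ad−bc)⁻¹, the new circulation satisfies a'·(c')⁻¹·d'·(b')⁻¹ = Ω⁻¹; that is, one evolution step inverts the multiplicative circulation around an active square. -/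
/-!
Write `δ = a d - b c` and `Ω = a⁻¹ c d⁻¹ b`. Clearing denominators gives
`1 - Ω = δ / (a d)` and `1 - Ω⁻¹ = -δ / (b c)`, which turn the four evolution formulas into the
stated ones and show `Ω ≠ 1`. In the rewritten form, the new circulation is
`Ω · ((1 - Ω⁻¹) / (1 - Ω))²`, and `1 - Ω⁻¹ = -Ω⁻¹ (1 - Ω)` makes this `Ω · Ω⁻² = Ω⁻¹`.
-/

section Circulation

variable {K : Type*} [Field K]

theorem one_sub_inv_eq_neg_inv_mul_one_sub {x : K} (hx : x ≠ 0) : 1 - x⁻¹ = -x⁻¹ * (1 - x) := by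
  field_simp
  ring

theorem one_sub_circulation {a b c d : K} (ha : a ≠ 0) (hd : d ≠ 0) :
    1 - a⁻¹ * c * d⁻¹ * b = (a * d - b * c) / (a * d) := by
  field_simp

-- The denominator is written `b * -c` to match the new link `b' = -c δ⁻¹`.
theorem one_sub_inv_circulation {a b c d : K} (hb : b ≠ 0) (hc : c ≠ 0) :
    1 - (a⁻¹ * c * d⁻¹ * b)⁻¹ = (a * d - b * c) / (b * -c) := by
  field_simp
  ring

theorem inv_mul_inv_eq_of_eq_div {x y t δ : K} (hx : x ≠ 0) (h : t = δ / (x * y)) :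
    x⁻¹ * t⁻¹ = y * δ⁻¹ := by
  rw [h, inv_div, mul_div_assoc', inv_mul_cancel_left₀ hx, div_eq_mul_inv]

theorem circulation_after_step_eq_inv {Ω a b c d : K} (hΩ0 : Ω ≠ 0) (hΩ1 : Ω ≠ 1)
    (hΩ : Ω = a⁻¹ * c * d⁻¹ * b) :
    a⁻¹ * (1 - Ω)⁻¹ * (c⁻¹ * (1 - Ω⁻¹)⁻¹)⁻¹ * (d⁻¹ * (1 - Ω)⁻¹) * (b⁻¹ * (1 - Ω⁻¹)⁻¹)⁻¹
      = Ω⁻¹ := by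
  have hratio : (1 - Ω⁻¹) * (1 - Ω)⁻¹ = -Ω⁻¹ := by
    rw [one_sub_inv_eq_neg_inv_mul_one_sub hΩ0, mul_assoc,
      mul_inv_cancel₀ (sub_ne_zero.mpr hΩ1.symm), mul_one]
  calc _ = a⁻¹ * c * d⁻¹ * b * ((1 - Ω⁻¹) * (1 - Ω)⁻¹) ^ 2 := by
        simp only [mul_inv, inv_inv]
        ring
    _ = Ω * ((1 - Ω⁻¹) * (1 - Ω)⁻¹) ^ 2 := by rw [hΩ]
    _ = Ω⁻¹ := by rw [hratio, neg_sq, inv_pow, sq, mul_inv, mul_inv_cancel_left₀ hΩ0]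

end Circulation

theorem stmt5 (a b c d Ω a' b' c' d' : ℂ)
    (ha : a ≠ 0) (hb : b ≠ 0) (hc : c ≠ 0) (hd : d ≠ 0)
    (hdet : a * d - b * c ≠ 0)
    (hΩ : Ω = a⁻¹ * c * d⁻¹ * b)
    (ha' : a' = d * (a * d - b * c)⁻¹)
    (hb' : b' = -c * (a * d - b * c)⁻¹)
    (hc' : c' = -b * (a * d - b * c)⁻¹)
    (hd' : d' = a * (a * d - b * c)⁻¹) :
    Ω ≠ 0 ∧ Ω ≠ 1 ∧
    a' = a⁻¹ * (1 - Ω)⁻¹ ∧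
    b' = b⁻¹ * (1 - Ω⁻¹)⁻¹ ∧
    c' = c⁻¹ * (1 - Ω⁻¹)⁻¹ ∧
    d' = d⁻¹ * (1 - Ω)⁻¹ ∧
    a' * c'⁻¹ * d' * b'⁻¹ = Ω⁻¹ := by
  have hΩ0 : Ω ≠ 0 := by rw [hΩ]; simp [ha, hb, hc, hd]
  have hΩsub : 1 - Ω = (a * d - b * c) / (a * d) := hΩ ▸ one_sub_circulation ha hd
  have hΩinv : 1 - Ω⁻¹ = (a * d - b * c) / (b * -c) := hΩ ▸ one_sub_inv_circulation hb hc
  have hΩ1 : Ω ≠ 1 := by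
    rintro rfl
    exact div_ne_zero hdet (mul_ne_zero ha hd) (by rw [← hΩsub, sub_self])
  have ha'' : a' = a⁻¹ * (1 - Ω)⁻¹ := ha' ▸ (inv_mul_inv_eq_of_eq_div ha hΩsub).symm
  have hd'' : d' = d⁻¹ * (1 - Ω)⁻¹ :=
    hd' ▸ (inv_mul_inv_eq_of_eq_div hd (by rwa [mul_comm d a])).symm
  have hb'' : b' = b⁻¹ * (1 - Ω⁻¹)⁻¹ := hb' ▸ (inv_mul_inv_eq_of_eq_div hb hΩinv).symm
  have hc'' : c' = c⁻¹ * (1 - Ω⁻¹)⁻¹ :=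
    hc' ▸ (inv_mul_inv_eq_of_eq_div hc (by rw [hΩinv, mul_neg, mul_neg, mul_comm b c])).symm
  refine ⟨hΩ0, hΩ1, ha'', hb'', hc'', hd'', ?_⟩
  rw [ha'', hb'', hc'', hd'']
  exact circulation_after_step_eq_inv hΩ0 hΩ1 hΩ
end

section
/- Let A, B, C, D, Ã, B̃, C̃, D̃ be n×n complex matrices. Then the following are equivalent: (a) ÃA + C̃C = B̃B + D̃D, ÃB + C̃D = 0, and B̃A + D̃C = 0; (b) for every complex number u: (Ã − u·B̃)·(u·A + B) + (C̃ − u·D̃)·(u·C + D) = 0. Moreover, when these conditions hold, for every u ∈ ℂ such that Ã − u·B̃ and u·C + D are invertible one has −(Ã − u·B̃)⁻¹·(C̃ − u·D̃) = (u·A + B)·(u·C + D)⁻¹. -/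
/-!
Expanding the product in `u` gives the quadratic
`(ÃB + C̃D) + u (ÃA + C̃C − B̃B − D̃D) − u² (B̃A + D̃C)`, which vanishes identically iff its three
coefficients vanish (evaluate at `u = 0, 1, −1`). The Lax relation follows by multiplying
`(Ã − uB̃)(uA + B) = −(C̃ − uD̃)(uC + D)` by `(Ã − uB̃)⁻¹` on the left and `(uC + D)⁻¹` on the right.
-/

open Matrix

theorem sub_smul_mul_add_sub_smul_mul_eq {R M : Type*} [CommRing R] [Ring M] [Algebra R M]
    (A B C D At Bt Ct Dt : M) (u : R) :
    (At - u • Bt) * (u • A + B) + (Ct - u • Dt) * (u • C + D) =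
      (At * B + Ct * D) + u • (At * A + Ct * C - (Bt * B + Dt * D)) +
        u ^ 2 • -(Bt * A + Dt * C) := by
  simp only [sub_mul, mul_add, smul_mul_assoc, mul_smul_comm, smul_add, smul_sub, smul_smul]
  module

theorem forall_add_smul_add_sq_smul_eq_zero_iff {K M : Type*} [Field K] [NeZero (2 : K)]
    [AddCommGroup M] [Module K M] (c₀ c₁ c₂ : M) :
    (∀ u : K, c₀ + u • c₁ + u ^ 2 • c₂ = 0) ↔ c₀ = 0 ∧ c₁ = 0 ∧ c₂ = 0 := by
  refine ⟨fun h => ?_, fun ⟨h₀, h₁, h₂⟩ u => by simp [h₀, h₁, h₂]⟩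
  have at_zero : c₀ = 0 := by simpa using h 0
  have at_one : c₁ + c₂ = 0 := by simpa [at_zero] using h 1
  have at_neg_one : -c₁ + c₂ = 0 := by simpa [at_zero] using h (-1)
  have two_c₂ : (2 : K) • c₂ = 0 := by
    rw [two_smul]; linear_combination (norm := module) at_one + at_neg_one
  have hc₂ : c₂ = 0 := (smul_eq_zero.mp two_c₂).resolve_left two_ne_zero
  exact ⟨at_zero, by simpa [hc₂] using at_one, hc₂⟩

theorem neg_nonsing_inv_mul_eq_mul_nonsing_inv {ι α : Type*} [Fintype ι] [DecidableEq ι]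
    [CommRing α] {P Q R S : Matrix ι ι α} (hP : IsUnit P) (hS : IsUnit S)
    (h : P * Q + R * S = 0) : -(P⁻¹ * R) = Q * S⁻¹ := by
  have hPQ : P * (Q * S⁻¹) = -R := by
    rw [← Matrix.mul_assoc, eq_neg_of_add_eq_zero_left h, Matrix.neg_mul,
      Matrix.mul_nonsing_inv_cancel_right _ _ ((isUnit_iff_isUnit_det S).mp hS)]
  rw [← Matrix.mul_neg, ← hPQ,
    Matrix.nonsing_inv_mul_cancel_left _ _ ((isUnit_iff_isUnit_det P).mp hP)]

theorem stmt9 {n : ℕ} (A B C D At Bt Ct Dt : Matrix (Fin n) (Fin n) ℂ) :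
    ((At * A + Ct * C = Bt * B + Dt * D ∧ At * B + Ct * D = 0 ∧ Bt * A + Dt * C = 0) ↔
      ∀ u : ℂ, (At - u • Bt) * (u • A + B) + (Ct - u • Dt) * (u • C + D) = 0) ∧
    ((At * A + Ct * C = Bt * B + Dt * D ∧ At * B + Ct * D = 0 ∧ Bt * A + Dt * C = 0) →
      ∀ u : ℂ, IsUnit (At - u • Bt) → IsUnit (u • C + D) →
        -((At - u • Bt)⁻¹ * (Ct - u • Dt)) = (u • A + B) * (u • C + D)⁻¹) := by
  have equiv : (At * A + Ct * C = Bt * B + Dt * D ∧ At * B + Ct * D = 0 ∧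
      Bt * A + Dt * C = 0) ↔
      ∀ u : ℂ, (At - u • Bt) * (u • A + B) + (Ct - u • Dt) * (u • C + D) = 0 := by
    simp only [sub_smul_mul_add_sub_smul_mul_eq, forall_add_smul_add_sq_smul_eq_zero_iff,
      sub_eq_zero, neg_eq_zero]
    tauto
  exact ⟨equiv, fun h u hP hS => neg_nonsing_inv_mul_eq_mul_nonsing_inv hP hS (equiv.mp h u)⟩
end

section
/- Fix positive integers m, n, r and consider complex matrices of size (m+n+r) in 3×3 block form with diagonal blocks of sizes m, n, r. Let 𝒜₁, 𝒜₂, 𝒜₃ and 𝒜₁', 𝒜₂', 𝒜₃' have the shapes 𝒜₁ = [[A₁,B₁,0],[C₁,D₁,0],[0,0,1_r]], 𝒜₂ = [[A₂,0,B₂],[0,1_n,0],[C₂,0,D₂]], 𝒜₃ = [[1_m,0,0],[0,A₃,B₃],[0,C₃,D₃]] (and likewise for the primed matrices). Suppose 𝒜 := 𝒜₁𝒜₂𝒜₃ is invertible, the blocks A₂ and D₂ of 𝒜₂ are invertible, and 𝒜 = 𝒜₁'𝒜₂'𝒜₃'. Then there exist invertible matrices M₁ (m×m), M₂ (n×n),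 M₃ (r×r) such that 𝒜₁' = 𝒜₁·diag(M₁⁻¹, M₂⁻¹, 1_r), 𝒜₂' = diag(M₁, 1_n, 1_r)·𝒜₂·diag(1_m, 1_n, M₃⁻¹), and 𝒜₃' = diag(1_m, M₂, M₃)·𝒜₃; that is, the factorization 𝒜 = 𝒜₁𝒜₂𝒜₃ is unique up to these gauge transformations. -/
open Matrix

/-- A `3 × 3` block matrix with diagonal blocks of sizes `m`, `n`, `r`. -/
def blk3 {m n r : ℕ}
    (A : Matrix (Fin m) (Fin m) ℂ) (B : Matrix (Fin m) (Fin n) ℂ) (C : Matrix (Fin m) (Fin r) ℂ)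
    (D : Matrix (Fin n) (Fin m) ℂ) (E : Matrix (Fin n) (Fin n) ℂ) (F : Matrix (Fin n) (Fin r) ℂ)
    (G : Matrix (Fin r) (Fin m) ℂ) (H : Matrix (Fin r) (Fin n) ℂ) (K : Matrix (Fin r) (Fin r) ℂ) :
    Matrix (Fin m ⊕ (Fin n ⊕ Fin r)) (Fin m ⊕ (Fin n ⊕ Fin r)) ℂ :=
  Matrix.fromBlocks A (Matrix.fromCols B C) (Matrix.fromRows D G)
    (Matrix.fromBlocks E F H K)

/-- The block-diagonal matrix `diag(M₁, M₂, M₃)`. -/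
def bdiag {m n r : ℕ} (M₁ : Matrix (Fin m) (Fin m) ℂ) (M₂ : Matrix (Fin n) (Fin n) ℂ)
    (M₃ : Matrix (Fin r) (Fin r) ℂ) :
    Matrix (Fin m ⊕ (Fin n ⊕ Fin r)) (Fin m ⊕ (Fin n ⊕ Fin r)) ℂ :=
  blk3 M₁ 0 0 0 M₂ 0 0 0 M₃

variable {m n r : ℕ}

lemma blk3_mul
    (a : Matrix (Fin m) (Fin m) ℂ) (b : Matrix (Fin m) (Fin n) ℂ) (c : Matrix (Fin m) (Fin r) ℂ)
    (d : Matrix (Fin n) (Fin m) ℂ) (e : Matrix (Fin n) (Fin n) ℂ) (f : Matrix (Fin n) (Fin r) ℂ)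
    (g : Matrix (Fin r) (Fin m) ℂ) (h : Matrix (Fin r) (Fin n) ℂ) (k : Matrix (Fin r) (Fin r) ℂ)
    (a' : Matrix (Fin m) (Fin m) ℂ) (b' : Matrix (Fin m) (Fin n) ℂ) (c' : Matrix (Fin m) (Fin r) ℂ)
    (d' : Matrix (Fin n) (Fin m) ℂ) (e' : Matrix (Fin n) (Fin n) ℂ) (f' : Matrix (Fin n) (Fin r) ℂ)
    (g' : Matrix (Fin r) (Fin m) ℂ) (h' : Matrix (Fin r) (Fin n) ℂ) (k' : Matrix (Fin r) (Fin r) ℂ) :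
    blk3 a b c d e f g h k * blk3 a' b' c' d' e' f' g' h' k' =
      blk3 (a*a'+b*d'+c*g') (a*b'+b*e'+c*h') (a*c'+b*f'+c*k')
           (d*a'+e*d'+f*g') (d*b'+e*e'+f*h') (d*c'+e*f'+f*k')
           (g*a'+h*d'+k*g') (g*b'+h*e'+k*h') (g*c'+h*f'+k*k') := by
  ext (i|j|k) (i'|j'|k') <;>
    simp [blk3, mul_apply, fromBlocks, fromCols, fromRows_apply_inl, fromRows_apply_inr, Fintype.sum_sum_type,
      Finset.sum_add_distrib, add_assoc]

lemma blk3_inj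
    {a a' : Matrix (Fin m) (Fin m) ℂ} {b b' : Matrix (Fin m) (Fin n) ℂ} {c c' : Matrix (Fin m) (Fin r) ℂ}
    {d d' : Matrix (Fin n) (Fin m) ℂ} {e e' : Matrix (Fin n) (Fin n) ℂ} {f f' : Matrix (Fin n) (Fin r) ℂ}
    {g g' : Matrix (Fin r) (Fin m) ℂ} {h h' : Matrix (Fin r) (Fin n) ℂ} {k k' : Matrix (Fin r) (Fin r) ℂ} :
    blk3 a b c d e f g h k = blk3 a' b' c' d' e' f' g' h' k' ↔
      a = a' ∧ b = b' ∧ c = c' ∧ d = d' ∧ e = e' ∧ f = f' ∧ g = g' ∧ h = h' ∧ k = k' := by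
  simp only [blk3, fromBlocks_inj, fromCols_ext_iff, fromRows_ext_iff]
  tauto

lemma det_blk3_A1 (a : Matrix (Fin m) (Fin m) ℂ) (b : Matrix (Fin m) (Fin n) ℂ)
    (c : Matrix (Fin n) (Fin m) ℂ) (d : Matrix (Fin n) (Fin n) ℂ) :
    (blk3 a b 0 c d 0 0 0 (1 : Matrix (Fin r) (Fin r) ℂ)).det = (fromBlocks a b c d).det := by
  have : blk3 a b 0 c d 0 0 0 (1 : Matrix (Fin r) (Fin r) ℂ) =
      reindex (Equiv.sumAssoc (Fin m) (Fin n) (Fin r)) (Equiv.sumAssoc (Fin m) (Fin n) (Fin r))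
        (fromBlocks (fromBlocks a b c d) 0 0 1) := by
    ext (i|j|k) (i'|j'|k') <;>
      simp [blk3, fromBlocks, fromCols, fromRows_apply_inl, fromRows_apply_inr, Equiv.sumAssoc, one_apply]
  rw [this, det_reindex_self, det_fromBlocks_zero₂₁]
  simp

lemma det_blk3_A3 (a : Matrix (Fin n) (Fin n) ℂ) (b : Matrix (Fin n) (Fin r) ℂ)
    (c : Matrix (Fin r) (Fin n) ℂ) (d : Matrix (Fin r) (Fin r) ℂ) :
    (blk3 (1 : Matrix (Fin m) (Fin m) ℂ) 0 0 0 a b 0 c d).det = (fromBlocks a b c d).det := by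
  have : blk3 (1 : Matrix (Fin m) (Fin m) ℂ) 0 0 0 a b 0 c d =
      fromBlocks 1 0 0 (fromBlocks a b c d) := by
    simp [blk3]
  rw [this, det_fromBlocks_zero₂₁]
  simp

lemma isUnit_of_mul_eq_one'' {k : ℕ} (A B : Matrix (Fin k) (Fin k) ℂ) (h : A * B = 1) :
    IsUnit A := ⟨⟨A, B, h, mul_eq_one_comm.mp h⟩, rfl⟩

theorem stmt10 {m n r : ℕ} (hm : 0 < m) (hn : 0 < n) (hr : 0 < r)
    (A1 : Matrix (Fin m) (Fin m) ℂ) (B1 : Matrix (Fin m) (Fin n) ℂ)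
    (C1 : Matrix (Fin n) (Fin m) ℂ) (D1 : Matrix (Fin n) (Fin n) ℂ)
    (A2 : Matrix (Fin m) (Fin m) ℂ) (B2 : Matrix (Fin m) (Fin r) ℂ)
    (C2 : Matrix (Fin r) (Fin m) ℂ) (D2 : Matrix (Fin r) (Fin r) ℂ)
    (A3 : Matrix (Fin n) (Fin n) ℂ) (B3 : Matrix (Fin n) (Fin r) ℂ)
    (C3 : Matrix (Fin r) (Fin n) ℂ) (D3 : Matrix (Fin r) (Fin r) ℂ)
    (A1' : Matrix (Fin m) (Fin m) ℂ) (B1' : Matrix (Fin m) (Fin n) ℂ)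
    (C1' : Matrix (Fin n) (Fin m) ℂ) (D1' : Matrix (Fin n) (Fin n) ℂ)
    (A2' : Matrix (Fin m) (Fin m) ℂ) (B2' : Matrix (Fin m) (Fin r) ℂ)
    (C2' : Matrix (Fin r) (Fin m) ℂ) (D2' : Matrix (Fin r) (Fin r) ℂ)
    (A3' : Matrix (Fin n) (Fin n) ℂ) (B3' : Matrix (Fin n) (Fin r) ℂ)
    (C3' : Matrix (Fin r) (Fin n) ℂ) (D3' : Matrix (Fin r) (Fin r) ℂ)
    (hA : IsUnit (blk3 A1 B1 0 C1 D1 0 0 0 1 * blk3 A2 0 B2 0 1 0 C2 0 D2 *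
      blk3 1 0 0 0 A3 B3 0 C3 D3))
    (hA2 : IsUnit A2) (hD2 : IsUnit D2)
    (heq : blk3 A1 B1 0 C1 D1 0 0 0 1 * blk3 A2 0 B2 0 1 0 C2 0 D2 *
        blk3 1 0 0 0 A3 B3 0 C3 D3 =
      blk3 A1' B1' 0 C1' D1' 0 0 0 1 * blk3 A2' 0 B2' 0 1 0 C2' 0 D2' *
        blk3 1 0 0 0 A3' B3' 0 C3' D3') :
    ∃ (M1 : Matrix (Fin m) (Fin m) ℂ) (M2 : Matrix (Fin n) (Fin n) ℂ)
      (M3 : Matrix (Fin r) (Fin r) ℂ),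
      IsUnit M1 ∧ IsUnit M2 ∧ IsUnit M3 ∧
      blk3 A1' B1' 0 C1' D1' 0 0 0 1 =
        blk3 A1 B1 0 C1 D1 0 0 0 1 * bdiag M1⁻¹ M2⁻¹ (1 : Matrix (Fin r) (Fin r) ℂ) ∧
      blk3 A2' 0 B2' 0 1 0 C2' 0 D2' =
        bdiag M1 (1 : Matrix (Fin n) (Fin n) ℂ) (1 : Matrix (Fin r) (Fin r) ℂ) * blk3 A2 0 B2 0 1 0 C2 0 D2 * bdiag (1 : Matrix (Fin m) (Fin m) ℂ) (1 : Matrix (Fin n) (Fin n) ℂ) M3⁻¹ ∧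
      blk3 1 0 0 0 A3' B3' 0 C3' D3' =
        bdiag (1 : Matrix (Fin m) (Fin m) ℂ) M2 M3 * blk3 1 0 0 0 A3 B3 0 C3 D3 := by
  classical
  have dA2 : IsUnit A2.det := (Matrix.isUnit_iff_isUnit_det _).mp hA2
  have dD2 : IsUnit D2.det := (Matrix.isUnit_iff_isUnit_det _).mp hD2
  -- units of the shaped factors
  have hA' := hA
  rw [Matrix.isUnit_iff_isUnit_det, Matrix.det_mul, Matrix.det_mul] at hA'
  have hd1 : IsUnit (blk3 A1 B1 0 C1 D1 0 0 0 (1 : Matrix (Fin r) (Fin r) ℂ)).det :=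
    isUnit_of_mul_isUnit_left (isUnit_of_mul_isUnit_left hA')
  have hd3 : IsUnit (blk3 (1 : Matrix (Fin m) (Fin m) ℂ) 0 0 0 A3 B3 0 C3 D3).det :=
    isUnit_of_mul_isUnit_right hA'
  have hU1 : IsUnit (blk3 A1 B1 0 C1 D1 0 0 0 (1 : Matrix (Fin r) (Fin r) ℂ)) :=
    (Matrix.isUnit_iff_isUnit_det _).mpr hd1
  have hU3 : IsUnit (blk3 (1 : Matrix (Fin m) (Fin m) ℂ) 0 0 0 A3 B3 0 C3 D3) :=
    (Matrix.isUnit_iff_isUnit_det _).mpr hd3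
  have dT : IsUnit (fromBlocks A1 B1 C1 D1).det := by rw [← det_blk3_A1 (r := r)]; exact hd1
  have dW : IsUnit (fromBlocks A3 B3 C3 D3).det := by rw [← det_blk3_A3 (m := m)]; exact hd3
  -- the gauge blocks
  obtain ⟨P, Q, R, S, hN⟩ : ∃ P Q R S,
      fromBlocks A1 B1 C1 D1 * fromBlocks P Q R S = fromBlocks A1' B1' C1' D1' := by
    set N := (fromBlocks A1 B1 C1 D1)⁻¹ * fromBlocks A1' B1' C1' D1' with hNdef
    exact ⟨N.toBlocks₁₁, N.toBlocks₁₂, N.toBlocks₂₁, N.toBlocks₂₂, by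
      rw [fromBlocks_toBlocks, hNdef, ← Matrix.mul_assoc, Matrix.mul_nonsing_inv _ dT,
        Matrix.one_mul]⟩
  rw [fromBlocks_multiply, fromBlocks_inj] at hN
  obtain ⟨g1, g2, g3, g4⟩ := hN
  obtain ⟨E, F, G, H, hK⟩ : ∃ E F G H,
      fromBlocks E F G H * fromBlocks A3 B3 C3 D3 = fromBlocks A3' B3' C3' D3' := by
    set K := fromBlocks A3' B3' C3' D3' * (fromBlocks A3 B3 C3 D3)⁻¹ with hKdef
    exact ⟨K.toBlocks₁₁, K.toBlocks₁₂, K.toBlocks₂₁, K.toBlocks₂₂, by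
      rw [fromBlocks_toBlocks, hKdef, Matrix.mul_assoc, Matrix.nonsing_inv_mul _ dW,
        Matrix.mul_one]⟩
  rw [fromBlocks_multiply, fromBlocks_inj] at hK
  obtain ⟨k1, k2, k3, k4⟩ := hK
  -- factor the primed outer matrices
  have hX : blk3 A1' B1' 0 C1' D1' 0 0 0 (1 : Matrix (Fin r) (Fin r) ℂ) =
      blk3 A1 B1 0 C1 D1 0 0 0 1 * blk3 P Q 0 R S 0 0 0 1 := by
    rw [blk3_mul]
    simp only [Matrix.mul_zero, Matrix.zero_mul, Matrix.mul_one, Matrix.one_mul, add_zero,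
      zero_add]
    rw [blk3_inj]
    exact ⟨g1.symm, g2.symm, rfl, g3.symm, g4.symm, rfl, rfl, rfl, rfl⟩
  have hY : blk3 (1 : Matrix (Fin m) (Fin m) ℂ) 0 0 0 A3' B3' 0 C3' D3' =
      blk3 1 0 0 0 E F 0 G H * blk3 1 0 0 0 A3 B3 0 C3 D3 := by
    rw [blk3_mul]
    simp only [Matrix.mul_zero, Matrix.zero_mul, Matrix.mul_one, Matrix.one_mul, add_zero,
      zero_add]
    rw [blk3_inj]
    exact ⟨rfl, rfl, rfl, rfl, k1.symm, k2.symm, rfl, k3.symm, k4.symm⟩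
  -- cancel the outer factors
  rw [hX, hY] at heq
  have e2 : blk3 A2 0 B2 0 1 0 C2 0 D2 *
      blk3 (1 : Matrix (Fin m) (Fin m) ℂ) 0 0 0 A3 B3 0 C3 D3 =
      (blk3 P Q 0 R S 0 0 0 1 * blk3 A2' 0 B2' 0 1 0 C2' 0 D2' *
        blk3 1 0 0 0 E F 0 G H) * blk3 1 0 0 0 A3 B3 0 C3 D3 :=
    hU1.mul_left_cancel (by simpa only [Matrix.mul_assoc] using heq)
  have e3 : blk3 A2 0 B2 0 1 0 C2 0 D2 =
      blk3 P Q 0 R S 0 0 0 1 * blk3 A2' 0 B2' 0 1 0 C2' 0 D2' *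
        blk3 1 0 0 0 E F 0 G H := hU3.mul_right_cancel e2
  rw [blk3_mul, blk3_mul] at e3
  simp only [Matrix.mul_zero, Matrix.zero_mul, Matrix.mul_one, Matrix.one_mul, add_zero,
    zero_add] at e3
  rw [blk3_inj] at e3
  obtain ⟨c1, c2, c3, c4, c5, c6, c7, c8, c9⟩ := e3
  -- derive the structure of the gauge blocks
  have hPu : IsUnit P := isUnit_of_mul_eq_one'' P (A2' * A2⁻¹) (by
    rw [← Matrix.mul_assoc, ← c1, Matrix.mul_nonsing_inv _ dA2])
  have dP : IsUnit P.det := (Matrix.isUnit_iff_isUnit_det _).mp hPu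
  have hA2'eq : A2' = P⁻¹ * A2 := by
    rw [c1, ← Matrix.mul_assoc, Matrix.nonsing_inv_mul _ dP, Matrix.one_mul]
  have hA2'u : IsUnit A2' := by
    rw [hA2'eq]; exact (Matrix.isUnit_nonsing_inv_iff.mpr hPu).mul hA2
  have dA2' : IsUnit A2'.det := (Matrix.isUnit_iff_isUnit_det _).mp hA2'u
  have hR : R = 0 := by
    calc R = R * (A2' * A2'⁻¹) := by rw [Matrix.mul_nonsing_inv _ dA2', Matrix.mul_one]
    _ = 0 := by rw [← Matrix.mul_assoc, ← c4, Matrix.zero_mul]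
  have hSE : S * E = 1 := by
    rw [hR] at c5; simpa using c5.symm
  have hSu : IsUnit S := isUnit_of_mul_eq_one'' _ _ hSE
  have dS : IsUnit S.det := (Matrix.isUnit_iff_isUnit_det _).mp hSu
  have hE : E = S⁻¹ := (Matrix.inv_eq_right_inv hSE).symm
  have hF : F = 0 := by
    rw [hR] at c6
    simp only [Matrix.zero_mul, add_zero] at c6
    calc F = S⁻¹ * (S * F) := by rw [← Matrix.mul_assoc, Matrix.nonsing_inv_mul _ dS,
        Matrix.one_mul]
    _ = 0 := by rw [← c6, Matrix.mul_zero]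
  have hDH : (D2⁻¹ * D2') * H = 1 := by
    rw [Matrix.mul_assoc, ← c9, Matrix.nonsing_inv_mul _ dD2]
  have hHD : H * (D2⁻¹ * D2') = 1 := mul_eq_one_comm.mp hDH
  have hHu : IsUnit H := isUnit_of_mul_eq_one'' _ _ hHD
  have dH : IsUnit H.det := (Matrix.isUnit_iff_isUnit_det _).mp hHu
  have hHinv : H⁻¹ = D2⁻¹ * D2' := Matrix.inv_eq_right_inv hHD
  have hD2' : D2' = D2 * H⁻¹ := by
    rw [hHinv, ← Matrix.mul_assoc, Matrix.mul_nonsing_inv _ dD2, Matrix.one_mul]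
  have hD2'u : IsUnit D2' := by rw [hD2']; exact hD2.mul (Matrix.isUnit_nonsing_inv_iff.mpr hHu)
  have dD2' : IsUnit D2'.det := (Matrix.isUnit_iff_isUnit_det _).mp hD2'u
  have hG : G = 0 := by
    calc G = D2'⁻¹ * (D2' * G) := by rw [← Matrix.mul_assoc, Matrix.nonsing_inv_mul _ dD2',
        Matrix.one_mul]
    _ = 0 := by rw [← c8, Matrix.mul_zero]
  have hQ : Q = 0 := by
    rw [hG] at c2
    simp only [Matrix.mul_zero, add_zero] at c2
    calc Q = Q * E * S := by rw [hE, Matrix.mul_assoc, Matrix.nonsing_inv_mul _ dS,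
        Matrix.mul_one]
    _ = 0 := by rw [← c2, Matrix.zero_mul]
  have hPBH : P * B2' * H = B2 := by
    rw [hQ] at c3
    simp only [Matrix.zero_mul, zero_add] at c3
    exact c3.symm
  have hB2' : B2' = P⁻¹ * B2 * H⁻¹ := by
    rw [← hPBH]
    rw [← Matrix.mul_assoc, ← Matrix.mul_assoc, Matrix.nonsing_inv_mul _ dP, Matrix.one_mul,
      Matrix.mul_assoc, Matrix.mul_nonsing_inv _ dH, Matrix.mul_one]
  refine ⟨P⁻¹, S⁻¹, H, Matrix.isUnit_nonsing_inv_iff.mpr hPu,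
    Matrix.isUnit_nonsing_inv_iff.mpr hSu, hHu, ?_, ?_, ?_⟩
  · rw [Matrix.nonsing_inv_nonsing_inv _ dP, Matrix.nonsing_inv_nonsing_inv _ dS]
    simp only [bdiag]
    rw [blk3_mul]
    simp only [Matrix.mul_zero, Matrix.zero_mul, Matrix.mul_one, Matrix.one_mul, add_zero,
      zero_add]
    rw [blk3_inj]
    rw [hR] at g1 g3; rw [hQ] at g2 g4
    simp only [Matrix.mul_zero, Matrix.zero_mul, add_zero, zero_add] at g1 g2 g3 g4
    exact ⟨g1.symm, g2.symm, rfl, g3.symm, g4.symm, rfl, rfl, rfl, rfl⟩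
  · simp only [bdiag]
    rw [blk3_mul, blk3_mul]
    simp only [Matrix.mul_zero, Matrix.zero_mul, Matrix.mul_one, Matrix.one_mul, add_zero,
      zero_add]
    rw [blk3_inj]
    exact ⟨hA2'eq, rfl, hB2', rfl, rfl, rfl, c7.symm, rfl, hD2'⟩
  · simp only [bdiag]
    rw [blk3_mul]
    simp only [Matrix.mul_zero, Matrix.zero_mul, Matrix.mul_one, Matrix.one_mul, add_zero,
      zero_add]
    rw [blk3_inj]
    rw [hF] at k1 k2; rw [hG] at k3 k4
    simp only [Matrix.mul_zero, Matrix.zero_mul, add_zero, zero_add] at k1 k2 k3 k4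
    rw [hE] at k1 k2
    exact ⟨rfl, rfl, rfl, rfl, k1.symm, k2.symm, rfl, k3.symm, k4.symm⟩
end

section
/- Fix positive integers m, n, r and ε ∈ {1, −1}. Let M = diag(M₁,M₂,M₃) be an invertible block-diagonal complex (m+n+r)-square matrix with Mᵀ = ε·M. Let 𝒜 be an invertible (m+n+r)-square matrix with 𝒜ᵀ = M·𝒜⁻¹·M⁻¹, and suppose 𝒜 admits a factorization 𝒜 = 𝒜₁𝒜₂𝒜₃ into matrices of 𝒜₁-shape, 𝒜₂-shape, 𝒜₃-shape, in which the corner blocks A₂ and D₂ of 𝒜₂ are invertible. Then there exists a factorization 𝒜 = Ã₁Ã₂Ã₃ into matrices of the same three shapes such that each factor separately satisfies Ãᵢᵀ = M·Ãᵢ⁻¹·M⁻¹ for i = 1, 2, 3. -/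
open Matrix Polynomial

/-! ### Polynomial square root machinery -/

lemma loc_sqrt (l : ℂ) (hl : l ≠ 0) : ∀ k : ℕ, ∃ p : ℂ[X], (X - C l) ^ k ∣ p * p - X := by
  intro k
  induction k with
  | zero => exact ⟨0, by simp⟩
  | succ k ih =>
    rcases Nat.eq_zero_or_pos k with hk | hk
    · subst hk
      obtain ⟨z, hz⟩ := IsAlgClosed.exists_pow_nat_eq l (n := 2) (by norm_num)
      refine ⟨C z, ?_⟩
      have : C z * C z - X = -((X - C l) ^ 1) := by
        rw [← C_mul, ← pow_two, hz]; ring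
      rw [this]
      exact dvd_neg.mpr dvd_rfl
    · obtain ⟨p, hp⟩ := ih
      obtain ⟨e, he⟩ := hp
      have hXl : (X - C l) ∣ p * p - X :=
        dvd_trans (dvd_pow_self _ hk.ne') ⟨e, he⟩
      have hpl : p.eval l * p.eval l = l := by
        obtain ⟨f, hf⟩ := hXl
        have h2 := congrArg (Polynomial.eval l) hf
        simp at h2
        linear_combination h2
      have hp0 : p.eval l ≠ 0 := fun h => hl (by rw [← hpl, h, zero_mul])
      set c : ℂ := -(e.eval l) / (2 * p.eval l) with hc
      refine ⟨p + C c * (X - C l) ^ k, ?_⟩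
      have expand : (p + C c * (X - C l) ^ k) * (p + C c * (X - C l) ^ k) - X
          = (X - C l) ^ k * (e + (2 * C c) * p)
            + (C c * C c) * ((X - C l) ^ k * (X - C l) ^ k) := by
        have : p * p - X = (X - C l) ^ k * e := he
        linear_combination this
      rw [expand]
      refine dvd_add ?_ ?_
      · rw [pow_succ]
        refine mul_dvd_mul_left _ ?_
        rw [dvd_iff_isRoot]
        have : (2 : ℂ) * c * p.eval l = -(e.eval l) := by
          rw [hc]
          field_simp
        simp [IsRoot, this]
      · refine Dvd.dvd.mul_left ?_ _
        rw [← pow_add]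
        exact pow_dvd_pow _ (by omega)

lemma crt_poly (s : Finset ℂ) (k : ℂ → ℕ) (g : ℂ → ℂ[X]) :
    ∃ p : ℂ[X], ∀ l ∈ s, (X - C l) ^ (k l) ∣ p - g l := by
  classical
  induction s using Finset.induction_on with
  | empty => exact ⟨0, by simp⟩
  | @insert a s ha ih =>
    obtain ⟨p, hp⟩ := ih
    set F : ℂ[X] := ∏ l ∈ s, (X - C l) ^ (k l) with hF
    have hcop : IsCoprime ((X - C a) ^ (k a)) F := by
      refine IsCoprime.pow_left ?_
      refine IsCoprime.prod_right fun l hl => ?_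
      refine IsCoprime.pow_right ?_
      exact isCoprime_X_sub_C_of_isUnit_sub (by
        have : a ≠ l := fun h => ha (h ▸ hl)
        exact (sub_ne_zero.mpr this).isUnit)
    obtain ⟨u, v, huv⟩ := hcop
    refine ⟨p + F * (v * (g a - p)), fun l hl => ?_⟩
    rcases Finset.mem_insert.mp hl with rfl | hl
    · have : p + F * (v * (g l - p)) - g l = ((X - C l) ^ (k l)) * (u * (p - g l)) := by
        linear_combination (g l - p) * huv
      rw [this]
      exact Dvd.dvd.mul_right dvd_rfl _
    · have hdF : (X - C l) ^ (k l) ∣ F := Finset.dvd_prod_of_mem _ hl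
      have : p + F * (v * (g a - p)) - g l = (p - g l) + F * (v * (g a - p)) := by ring
      rw [this]
      exact dvd_add (hp l hl) (hdF.mul_right _)

lemma exists_sqrt_poly {N : Type*} [Fintype N] [DecidableEq N] (A : Matrix N N ℂ)
    (hA : IsUnit A) : ∃ p : ℂ[X], (Polynomial.aeval A p) * (Polynomial.aeval A p) = A := by
  classical
  set q := A.charpoly with hq
  have hmono : q.Monic := A.charpoly_monic
  have hsplit : q = (q.roots.map fun a => X - C a).prod :=
    (IsAlgClosed.splits q).eq_prod_roots_of_monic hmono
  have hdetu : IsUnit A.det := (Matrix.isUnit_iff_isUnit_det A).mp hA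
  have hroots0 : ∀ l ∈ q.roots, l ≠ 0 := by
    intro l hl h0
    have : A.det = 0 := by
      rw [Matrix.det_eq_prod_roots_charpoly]
      exact Multiset.prod_eq_zero (h0 ▸ hl)
    simp [this] at hdetu
  have hqfin : q = ∏ l ∈ q.roots.toFinset, (X - C l) ^ (q.rootMultiplicity l) := by
    conv_lhs => rw [hsplit]
    exact prod_multiset_root_eq_finset_root
  have hloc : ∀ l ∈ q.roots.toFinset, ∃ p : ℂ[X],
      (X - C l) ^ (q.rootMultiplicity l) ∣ p * p - X := by
    intro l hl
    exact loc_sqrt l (hroots0 l (Multiset.mem_toFinset.mp hl)) _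
  choose! g hg using hloc
  obtain ⟨p, hp⟩ := crt_poly q.roots.toFinset (fun l => q.rootMultiplicity l) g
  have hdvd : q ∣ p * p - X := by
    rw [hqfin]
    refine Finset.prod_dvd_of_coprime ?_ ?_
    · intro a ha b hb hab
      refine IsCoprime.pow ?_
      exact isCoprime_X_sub_C_of_isUnit_sub (sub_ne_zero.mpr hab).isUnit
    · intro l hl
      have h1 := hp l hl
      have h2 := hg l hl
      have : p * p - X = (p - g l) * (p + g l) + (g l * g l - X) := by ring
      rw [this]
      exact dvd_add (h1.mul_right _) h2
  obtain ⟨cfac, hcfac⟩ := hdvd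
  refine ⟨p, ?_⟩
  have h0 : Polynomial.aeval A (p * p - X) = 0 := by
    rw [hcfac, _root_.map_mul]
    have hz : Polynomial.aeval A q = 0 := A.aeval_self_charpoly
    rw [hz, zero_mul]
  rw [map_sub, _root_.map_mul, Polynomial.aeval_X, sub_eq_zero] at h0
  exact h0

lemma aeval_transpose' {N : Type*} [Fintype N] [DecidableEq N] (A : Matrix N N ℂ) (p : ℂ[X]) :
    (Polynomial.aeval A p)ᵀ = Polynomial.aeval Aᵀ p := by
  induction p using Polynomial.induction_on' with
  | add p q hp hq => simp [hp, hq]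
  | monomial n a =>
    simp [Polynomial.aeval_monomial, Matrix.transpose_pow, Algebra.algebraMap_eq_smul_one,
      smul_mul_assoc, Matrix.transpose_smul]

lemma aeval_conj' {N : Type*} [Fintype N] [DecidableEq N] (M A : Matrix N N ℂ) (hM : IsUnit M.det)
    (p : ℂ[X]) : Polynomial.aeval (M * A * M⁻¹) p = M * Polynomial.aeval A p * M⁻¹ := by
  induction p using Polynomial.induction_on' with
  | add p q hp hq => rw [map_add, map_add, hp, hq, Matrix.mul_add, Matrix.add_mul]
  | monomial k a =>
    have hpow : ∀ k : ℕ, (M * A * M⁻¹) ^ k = M * A ^ k * M⁻¹ := by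
      intro k
      induction k with
      | zero => simp [Matrix.mul_one, Matrix.mul_nonsing_inv M hM]
      | succ k ih =>
        rw [pow_succ, ih, pow_succ]
        calc M * A ^ k * M⁻¹ * (M * A * M⁻¹)
            = M * A ^ k * (M⁻¹ * M * (A * M⁻¹)) := by
              simp only [Matrix.mul_assoc]
          _ = M * (A ^ k * A) * M⁻¹ := by
              rw [Matrix.nonsing_inv_mul M hM, Matrix.one_mul]
              simp only [Matrix.mul_assoc]
    simp only [Polynomial.aeval_monomial, hpow, Algebra.algebraMap_eq_smul_one,
      smul_mul_assoc, Matrix.one_mul, mul_smul_comm]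

/-- Congruence of invertible ε-symmetric matrices over ℂ. -/
lemma congr_exists {N : Type*} [Fintype N] [DecidableEq N] (ε : ℂ) (hε2 : ε * ε = 1)
    (M S : Matrix N N ℂ) (hM : IsUnit M) (hS : IsUnit S)
    (hMs : Mᵀ = ε • M) (hSs : Sᵀ = ε • S) :
    ∃ P Pi : Matrix N N ℂ, P * Pi = 1 ∧ Pi * P = 1 ∧ Pᵀ * S * P = M ∧ Piᵀ * M * Pi = S := by
  have hMd : IsUnit M.det := (Matrix.isUnit_iff_isUnit_det M).mp hM
  have hSd : IsUnit S.det := (Matrix.isUnit_iff_isUnit_det S).mp hS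
  set A := M⁻¹ * S with hA
  have hAd : IsUnit A.det := by
    rw [hA, Matrix.det_mul]
    exact (Matrix.isUnit_nonsing_inv_det M hMd).mul hSd
  have hAu : IsUnit A := (Matrix.isUnit_iff_isUnit_det A).mpr hAd
  have hSMA : S = M * A := by
    rw [hA, Matrix.mul_nonsing_inv_cancel_left _ _ hMd]
  have hMinv : (ε • M)⁻¹ = ε • M⁻¹ := by
    apply Matrix.inv_eq_right_inv
    rw [smul_mul_smul_comm, hε2, Matrix.mul_nonsing_inv _ hMd, one_smul]
  have hAT : Aᵀ = M * A * M⁻¹ := by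
    have h1 : Aᵀ = S * M⁻¹ := by
      rw [hA, Matrix.transpose_mul, Matrix.transpose_nonsing_inv, hMs, hSs, hMinv,
        smul_mul_smul_comm, hε2, one_smul]
    rw [h1, hSMA]
  obtain ⟨p, hp⟩ := exists_sqrt_poly A hAu
  set R := Polynomial.aeval A p with hR
  have hRR : R * R = A := hp
  have hRd : IsUnit R.det := by
    have : IsUnit (R.det * R.det) := by
      rw [← Matrix.det_mul, hRR]; exact hAd
    exact isUnit_of_mul_isUnit_left this
  have hRT : Rᵀ = M * R * M⁻¹ := by
    rw [hR, aeval_transpose', hAT, aeval_conj' _ _ hMd]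
  have hRTinv : (Rᵀ)⁻¹ = M * R⁻¹ * M⁻¹ := by
    rw [hRT]
    apply Matrix.inv_eq_right_inv
    simp only [Matrix.mul_assoc]
    rw [Matrix.nonsing_inv_mul_cancel_left _ _ hMd,
      Matrix.mul_nonsing_inv_cancel_left _ _ hRd, Matrix.mul_nonsing_inv _ hMd]
  have hmain : (R⁻¹)ᵀ * S * R⁻¹ = M := by
    rw [Matrix.transpose_nonsing_inv, hRTinv, hSMA]
    rw [← hRR]
    simp only [Matrix.mul_assoc]
    rw [Matrix.nonsing_inv_mul_cancel_left _ _ hMd, Matrix.mul_nonsing_inv _ hRd,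
      Matrix.mul_one, Matrix.nonsing_inv_mul _ hRd, Matrix.mul_one]
  refine ⟨R⁻¹, R, Matrix.nonsing_inv_mul _ hRd, Matrix.mul_nonsing_inv _ hRd, hmain, ?_⟩
  have h2 := congrArg (fun Z => Rᵀ * Z * R) hmain
  rw [← h2]
  simp only [Matrix.mul_assoc]
  rw [Matrix.nonsing_inv_mul _ hRd, Matrix.mul_one, ← Matrix.mul_assoc,
    ← Matrix.transpose_mul, Matrix.nonsing_inv_mul _ hRd, Matrix.transpose_one,
    Matrix.one_mul]

/-- `𝒜₁`-shape: `[[A₁,B₁,0],[C₁,D₁,0],[0,0,1]]`. -/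
def Shape1 {m n r : ℕ} (M : Matrix (Fin m ⊕ (Fin n ⊕ Fin r)) (Fin m ⊕ (Fin n ⊕ Fin r)) ℂ) :
    Prop :=
  ∃ (A : Matrix (Fin m) (Fin m) ℂ) (B : Matrix (Fin m) (Fin n) ℂ)
    (C : Matrix (Fin n) (Fin m) ℂ) (D : Matrix (Fin n) (Fin n) ℂ),
    M = blk3 A B 0 C D 0 0 0 1

/-- `𝒜₂`-shape: `[[A₂,0,B₂],[0,1,0],[C₂,0,D₂]]`. -/
def Shape2 {m n r : ℕ} (M : Matrix (Fin m ⊕ (Fin n ⊕ Fin r)) (Fin m ⊕ (Fin n ⊕ Fin r)) ℂ) :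
    Prop :=
  ∃ (A : Matrix (Fin m) (Fin m) ℂ) (B : Matrix (Fin m) (Fin r) ℂ)
    (C : Matrix (Fin r) (Fin m) ℂ) (D : Matrix (Fin r) (Fin r) ℂ),
    M = blk3 A 0 B 0 1 0 C 0 D

/-- `𝒜₃`-shape: `[[1,0,0],[0,A₃,B₃],[0,C₃,D₃]]`. -/
def Shape3 {m n r : ℕ} (M : Matrix (Fin m ⊕ (Fin n ⊕ Fin r)) (Fin m ⊕ (Fin n ⊕ Fin r)) ℂ) :
    Prop :=
  ∃ (A : Matrix (Fin n) (Fin n) ℂ) (B : Matrix (Fin n) (Fin r) ℂ)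
    (C : Matrix (Fin r) (Fin n) ℂ) (D : Matrix (Fin r) (Fin r) ℂ),
    M = blk3 1 0 0 0 A B 0 C D


variable {m n r : ℕ}

lemma fromColumns_add' {α : Type*} [Add α] {m n₁ n₂ : Type*} (A A' : Matrix m n₁ α)
    (B B' : Matrix m n₂ α) :
    fromCols A B + fromCols A' B' = fromCols (A + A') (B + B') := by
  ext i (j | j) <;> simp [fromCols]

lemma fromRows_add' {α : Type*} [Add α] {m₁ m₂ n : Type*} (A A' : Matrix m₁ n α)
    (B B' : Matrix m₂ n α) :
    fromRows A B + fromRows A' B' = fromRows (A + A') (B + B') := by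
  ext (i | i) j <;> rfl

lemma blk3_mul_s16 (A B C D E F G H K A' B' C' D' E' F' G' H' K') :
    blk3 (m := m) (n := n) (r := r) A B C D E F G H K * blk3 A' B' C' D' E' F' G' H' K' =
    blk3 (A * A' + (B * D' + C * G')) (A * B' + (B * E' + C * H')) (A * C' + (B * F' + C * K'))
         (D * A' + (E * D' + F * G')) (D * B' + (E * E' + F * H')) (D * C' + (E * F' + F * K'))
         (G * A' + (H * D' + K * G')) (G * B' + (H * E' + K * H')) (G * C' + (H * F' + K * K')) := by
  unfold blk3
  rw [fromBlocks_multiply, fromCols_mul_fromRows, fromRows_mul_fromCols,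
    mul_fromCols, fromCols_mul_fromBlocks, fromRows_mul, fromBlocks_mul_fromRows,
    fromBlocks_multiply]
  rw [fromColumns_add', fromRows_add', fromBlocks_add]

lemma fromColumns_smul' {α : Type*} [SMul ℂ α] {m n₁ n₂ : Type*} (c : ℂ) (A : Matrix m n₁ α)
    (B : Matrix m n₂ α) : c • fromCols A B = fromCols (c • A) (c • B) := by
  ext i (j | j) <;> simp [fromCols]

lemma fromRows_smul' {α : Type*} [SMul ℂ α] {m₁ m₂ n : Type*} (c : ℂ) (A : Matrix m₁ n α)
    (B : Matrix m₂ n α) : c • fromRows A B = fromRows (c • A) (c • B) := by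
  ext (i | i) j <;> rfl

lemma blk3_transpose (A B C D E F G H K) :
    (blk3 (m := m) (n := n) (r := r) A B C D E F G H K)ᵀ =
      blk3 Aᵀ Dᵀ Gᵀ Bᵀ Eᵀ Hᵀ Cᵀ Fᵀ Kᵀ := by
  unfold blk3
  rw [fromBlocks_transpose, transpose_fromCols, transpose_fromRows, fromBlocks_transpose]

lemma blk3_smul (c : ℂ) (A B C D E F G H K) :
    c • blk3 (m := m) (n := n) (r := r) A B C D E F G H K =
      blk3 (c • A) (c • B) (c • C) (c • D) (c • E) (c • F) (c • G) (c • H) (c • K) := by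
  unfold blk3
  rw [fromBlocks_smul, fromColumns_smul', fromRows_smul', fromBlocks_smul]

lemma blk3_one : blk3 (m := m) (n := n) (r := r) 1 0 0 0 1 0 0 0 1 = 1 := by
  unfold blk3
  rw [fromCols_zero, fromRows_zero, fromBlocks_one, fromBlocks_one]

lemma blk3_inj_s16 {A B C D E F G H K A' B' C' D' E' F' G' H' K'}
    (h : blk3 (m := m) (n := n) (r := r) A B C D E F G H K = blk3 A' B' C' D' E' F' G' H' K') :
    A = A' ∧ B = B' ∧ C = C' ∧ D = D' ∧ E = E' ∧ F = F' ∧ G = G' ∧ H = H' ∧ K = K' := by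
  unfold blk3 at h
  rw [fromBlocks_inj] at h
  obtain ⟨h1, h2, h3, h4⟩ := h
  obtain ⟨hB, hC⟩ := fromCols_inj h2
  obtain ⟨hD, hG⟩ := fromRows_inj h3
  rw [fromBlocks_inj] at h4
  exact ⟨h1, hB, hC, hD, h4.1, h4.2.1, hG, h4.2.2.1, h4.2.2.2⟩

lemma blk3_shape3_eq (E : Matrix (Fin n) (Fin n) ℂ) (F : Matrix (Fin n) (Fin r) ℂ)
    (G : Matrix (Fin r) (Fin n) ℂ) (H : Matrix (Fin r) (Fin r) ℂ) :
    blk3 (m := m) 1 0 0 0 E F 0 G H = fromBlocks 1 0 0 (fromBlocks E F G H) := by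
  unfold blk3
  rw [fromCols_zero, fromRows_zero]

lemma det_blk3_diag (A : Matrix (Fin m) (Fin m) ℂ) (E : Matrix (Fin n) (Fin n) ℂ)
    (K : Matrix (Fin r) (Fin r) ℂ) :
    (blk3 A 0 0 0 E 0 0 0 K).det = A.det * (E.det * K.det) := by
  unfold blk3
  rw [fromCols_zero, fromRows_zero, det_fromBlocks_zero₂₁, det_fromBlocks_zero₂₁]

lemma bdiag_eq (X : Matrix (Fin m) (Fin m) ℂ) (Y : Matrix (Fin n) (Fin n) ℂ)
    (Z : Matrix (Fin r) (Fin r) ℂ) : bdiag X Y Z = blk3 X 0 0 0 Y 0 0 0 Z := rfl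

lemma bdiag_fromBlocks (X : Matrix (Fin m) (Fin m) ℂ) (Y : Matrix (Fin n) (Fin n) ℂ)
    (Z : Matrix (Fin r) (Fin r) ℂ) :
    bdiag X Y Z = fromBlocks X 0 0 (fromBlocks Y 0 0 Z) := by
  rw [bdiag_eq]; unfold blk3; rw [fromCols_zero, fromRows_zero]

lemma diag_mul_diag (X Y Z X' Y' Z') :
    bdiag (m := m) (n := n) (r := r) X Y Z * bdiag X' Y' Z' =
      bdiag (X * X') (Y * Y') (Z * Z') := by
  rw [bdiag_eq, bdiag_eq, bdiag_eq, blk3_mul_s16]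
  simp

lemma bdiag_transpose (X Y Z) :
    (bdiag (m := m) (n := n) (r := r) X Y Z)ᵀ = bdiag Xᵀ Yᵀ Zᵀ := by
  rw [bdiag_eq, bdiag_eq, blk3_transpose]
  simp

lemma shape1k_mul (a b c d k a' b' c' d' k') :
    blk3 (m := m) (n := n) (r := r) a b 0 c d 0 0 0 k * blk3 a' b' 0 c' d' 0 0 0 k' =
      blk3 (a * a' + b * c') (a * b' + b * d') 0 (c * a' + d * c') (c * b' + d * d') 0
        0 0 (k * k') := by
  rw [blk3_mul_s16]
  simp

lemma shape2k_mul (a b c d e a' b' c' d' e') :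
    blk3 (m := m) (n := n) (r := r) a 0 b 0 e 0 c 0 d * blk3 a' 0 b' 0 e' 0 c' 0 d' =
      blk3 (a * a' + b * c') 0 (a * b' + b * d') 0 (e * e') 0
        (c * a' + d * c') 0 (c * b' + d * d') := by
  rw [blk3_mul_s16]
  simp

lemma shape3_congr (t11 : Matrix (Fin m) (Fin m) ℂ) (t12 t13 t21 t22 t23 t31 t32 t33)
    (Nt N : Matrix (Fin n ⊕ Fin r) (Fin n ⊕ Fin r) ℂ) :
    fromBlocks 1 0 0 Nt * blk3 t11 t12 t13 t21 t22 t23 t31 t32 t33 * fromBlocks 1 0 0 N =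
      fromBlocks t11 (fromCols t12 t13 * N) (Nt * fromRows t21 t31)
        (Nt * fromBlocks t22 t23 t32 t33 * N) := by
  unfold blk3
  rw [fromBlocks_multiply, fromBlocks_multiply]
  simp

lemma sandwich_symm {N : Type*} [Fintype N] (ε : ℂ) (X S : Matrix N N ℂ) (h : Sᵀ = ε • S) :
    (Xᵀ * S * X)ᵀ = ε • (Xᵀ * S * X) := by
  simp [Matrix.transpose_mul, Matrix.mul_assoc, h, smul_mul_assoc, mul_smul_comm]

lemma strip_left {N : Type*} [Fintype N] (Mb X Y : Matrix N N ℂ)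
    (hX : Xᵀ * Mb * X = Mb) (hXY : (X * Y)ᵀ * Mb * (X * Y) = Mb) : Yᵀ * Mb * Y = Mb := by
  have h : Yᵀ * (Xᵀ * Mb * X) * Y = Mb := by
    simp only [Matrix.transpose_mul, Matrix.mul_assoc] at hXY ⊢
    exact hXY
  rwa [hX] at h

lemma strip_right {N : Type*} [Fintype N] [DecidableEq N] (Mb X Y : Matrix N N ℂ)
    (hY : Yᵀ * Mb * Y = Mb) (hYd : IsUnit Y.det)
    (hXY : (X * Y)ᵀ * Mb * (X * Y) = Mb) : Xᵀ * Mb * X = Mb := by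
  have hYTd : IsUnit Yᵀ.det := by rw [Matrix.det_transpose]; exact hYd
  have l1 : Yᵀ * ((Xᵀ * Mb * X) * Y) = Mb := by
    simp only [Matrix.transpose_mul, Matrix.mul_assoc] at hXY ⊢
    exact hXY
  have l2 := congrArg (fun Z => (Yᵀ)⁻¹ * Z * Y⁻¹) l1
  rw [Matrix.nonsing_inv_mul_cancel_left _ _ hYTd, Matrix.mul_assoc,
    Matrix.mul_nonsing_inv _ hYd, Matrix.mul_one] at l2
  rw [l2]
  have l3 : (Yᵀ)⁻¹ * ((Yᵀ * Mb * Y) * Y⁻¹) = Mb := by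
    simp only [Matrix.mul_assoc]
    rw [Matrix.nonsing_inv_mul_cancel_left _ _ hYTd, Matrix.mul_nonsing_inv _ hYd,
      Matrix.mul_one]
  rw [hY] at l3
  rw [← Matrix.mul_assoc] at l3
  exact l3

lemma cond_of {N : Type*} [Fintype N] [DecidableEq N] (Mb X : Matrix N N ℂ)
    (hMd : IsUnit Mb.det) (hXd : IsUnit X.det) (h : Xᵀ * Mb * X = Mb) :
    Xᵀ = Mb * X⁻¹ * Mb⁻¹ := by
  have h2 := congrArg (fun Z => Z * (X⁻¹ * Mb⁻¹)) h
  simp only [Matrix.mul_assoc] at h2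
  rw [Matrix.mul_nonsing_inv_cancel_left _ _ hXd, Matrix.mul_nonsing_inv _ hMd,
    Matrix.mul_one] at h2
  rw [h2, Matrix.mul_assoc]

theorem stmt16 {m n r : ℕ} (hm : 0 < m) (hn : 0 < n) (hr : 0 < r)
    (ε : ℂ) (hε : ε = 1 ∨ ε = -1)
    (M₁ : Matrix (Fin m) (Fin m) ℂ) (M₂ : Matrix (Fin n) (Fin n) ℂ)
    (M₃ : Matrix (Fin r) (Fin r) ℂ)
    (hM : IsUnit (bdiag M₁ M₂ M₃))
    (hMsym : (bdiag M₁ M₂ M₃)ᵀ = ε • bdiag M₁ M₂ M₃)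
    (𝒜 : Matrix (Fin m ⊕ (Fin n ⊕ Fin r)) (Fin m ⊕ (Fin n ⊕ Fin r)) ℂ)
    (h𝒜 : IsUnit 𝒜)
    (hrel : 𝒜ᵀ = bdiag M₁ M₂ M₃ * 𝒜⁻¹ * (bdiag M₁ M₂ M₃)⁻¹)
    (𝒜₁ 𝒜₃ : Matrix (Fin m ⊕ (Fin n ⊕ Fin r)) (Fin m ⊕ (Fin n ⊕ Fin r)) ℂ)
    (h1 : Shape1 𝒜₁) (h3 : Shape3 𝒜₃)
    (A₂ : Matrix (Fin m) (Fin m) ℂ) (B₂ : Matrix (Fin m) (Fin r) ℂ)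
    (C₂ : Matrix (Fin r) (Fin m) ℂ) (D₂ : Matrix (Fin r) (Fin r) ℂ)
    (hA₂ : IsUnit A₂) (hD₂ : IsUnit D₂)
    (hfac : 𝒜 = 𝒜₁ * blk3 A₂ 0 B₂ 0 1 0 C₂ 0 D₂ * 𝒜₃) :
    ∃ (ℬ₁ ℬ₂ ℬ₃ : Matrix (Fin m ⊕ (Fin n ⊕ Fin r)) (Fin m ⊕ (Fin n ⊕ Fin r)) ℂ),
      Shape1 ℬ₁ ∧ Shape2 ℬ₂ ∧ Shape3 ℬ₃ ∧
      𝒜 = ℬ₁ * ℬ₂ * ℬ₃ ∧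
      ℬ₁ᵀ = bdiag M₁ M₂ M₃ * ℬ₁⁻¹ * (bdiag M₁ M₂ M₃)⁻¹ ∧
      ℬ₂ᵀ = bdiag M₁ M₂ M₃ * ℬ₂⁻¹ * (bdiag M₁ M₂ M₃)⁻¹ ∧
      ℬ₃ᵀ = bdiag M₁ M₂ M₃ * ℬ₃⁻¹ * (bdiag M₁ M₂ M₃)⁻¹ := by
  obtain ⟨A₁, B₁, C₁, D₁, h1e⟩ := h1
  obtain ⟨A₃, B₃, C₃, D₃, h3e⟩ := h3
  set Mb := bdiag M₁ M₂ M₃ with hMbdef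
  set A2b := blk3 A₂ 0 B₂ 0 1 0 C₂ 0 D₂ with hA2bdef
  have hε2 : ε * ε = 1 := by rcases hε with h | h <;> rw [h] <;> norm_num
  have hMbd : IsUnit Mb.det := (Matrix.isUnit_iff_isUnit_det _).mp hM
  have hdetMb : Mb.det = M₁.det * (M₂.det * M₃.det) := det_blk3_diag M₁ M₂ M₃
  have hM1d : IsUnit M₁.det := isUnit_of_mul_isUnit_left (hdetMb ▸ hMbd)
  have hM23 : IsUnit (M₂.det * M₃.det) := isUnit_of_mul_isUnit_right (hdetMb ▸ hMbd)
  have hM2d : IsUnit M₂.det := isUnit_of_mul_isUnit_left hM23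
  have hM3d : IsUnit M₃.det := isUnit_of_mul_isUnit_right hM23
  have hM1 : IsUnit M₁ := (Matrix.isUnit_iff_isUnit_det _).mpr hM1d
  have hM2 : IsUnit M₂ := (Matrix.isUnit_iff_isUnit_det _).mpr hM2d
  have hM3 : IsUnit M₃ := (Matrix.isUnit_iff_isUnit_det _).mpr hM3d
  -- symmetry of the blocks of M
  have hsym3 : (blk3 M₁ 0 0 0 M₂ 0 0 0 M₃)ᵀ = ε • blk3 M₁ 0 0 0 M₂ 0 0 0 M₃ := hMsym
  rw [blk3_transpose, blk3_smul] at hsym3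
  obtain ⟨hMs1, -, -, -, hMs2, -, -, -, hMs3⟩ := blk3_inj_s16 hsym3
  -- units of the factors
  have h𝒜d : IsUnit 𝒜.det := (Matrix.isUnit_iff_isUnit_det _).mp h𝒜
  have hdfac : 𝒜.det = 𝒜₁.det * A2b.det * 𝒜₃.det := by rw [hfac, Matrix.det_mul, Matrix.det_mul]
  have hU1d : IsUnit 𝒜₁.det :=
    isUnit_of_mul_isUnit_left (isUnit_of_mul_isUnit_left (hdfac ▸ h𝒜d))
  have hU2d : IsUnit A2b.det :=
    isUnit_of_mul_isUnit_right (isUnit_of_mul_isUnit_left (hdfac ▸ h𝒜d))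
  have hU3d : IsUnit 𝒜₃.det := isUnit_of_mul_isUnit_right (hdfac ▸ h𝒜d)
  have hA₂d : IsUnit A₂.det := (Matrix.isUnit_iff_isUnit_det _).mp hA₂
  have hA₂Td : IsUnit (A₂ᵀ).det := by rw [Matrix.det_transpose]; exact hA₂d
  -- base relation
  have base : 𝒜ᵀ * Mb * 𝒜 = Mb := by
    rw [hrel]
    simp only [Matrix.mul_assoc]
    rw [Matrix.nonsing_inv_mul_cancel_left _ _ hMbd, Matrix.nonsing_inv_mul _ h𝒜d,
      Matrix.mul_one]
  -- the matrix S = 𝒜₁ᵀ M 𝒜₁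
  have h1T : 𝒜₁ᵀ = blk3 A₁ᵀ C₁ᵀ 0 B₁ᵀ D₁ᵀ 0 0 0 1 := by
    rw [h1e, blk3_transpose]
    simp only [Matrix.transpose_zero, Matrix.transpose_one]
  have hS : 𝒜₁ᵀ * Mb * 𝒜₁ =
      blk3 (A₁ᵀ * M₁ * A₁ + C₁ᵀ * M₂ * C₁) (A₁ᵀ * M₁ * B₁ + C₁ᵀ * M₂ * D₁) 0
        (B₁ᵀ * M₁ * A₁ + D₁ᵀ * M₂ * C₁) (B₁ᵀ * M₁ * B₁ + D₁ᵀ * M₂ * D₁) 0 0 0 M₃ := by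
    rw [h1T, hMbdef, bdiag_eq, h1e, shape1k_mul, shape1k_mul]
    simp [Matrix.mul_assoc]
  set sa := A₁ᵀ * M₁ * A₁ + C₁ᵀ * M₂ * C₁ with hsadef
  set sb := A₁ᵀ * M₁ * B₁ + C₁ᵀ * M₂ * D₁ with hsbdef
  set sc := B₁ᵀ * M₁ * A₁ + D₁ᵀ * M₂ * C₁ with hscdef
  set sd := B₁ᵀ * M₁ * B₁ + D₁ᵀ * M₂ * D₁ with hsddef
  -- T = A2bᵀ S A2b
  have h2T : A2bᵀ = blk3 A₂ᵀ 0 C₂ᵀ 0 1 0 B₂ᵀ 0 D₂ᵀ := by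
    rw [hA2bdef, blk3_transpose]
    simp only [Matrix.transpose_zero, Matrix.transpose_one]
  have hT : A2bᵀ * blk3 sa sb 0 sc sd 0 0 0 M₃ * A2b =
      blk3 (A₂ᵀ * sa * A₂ + C₂ᵀ * M₃ * C₂) (A₂ᵀ * sb) (A₂ᵀ * sa * B₂ + C₂ᵀ * M₃ * D₂)
        (sc * A₂) sd (sc * B₂)
        (B₂ᵀ * sa * A₂ + D₂ᵀ * M₃ * C₂) (B₂ᵀ * sb) (B₂ᵀ * sa * B₂ + D₂ᵀ * M₃ * D₂) := by
    rw [h2T, hA2bdef, blk3_mul_s16, blk3_mul_s16]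
    simp [Matrix.mul_assoc]
  -- main relation transported through the factorization
  have hmain : 𝒜₃ᵀ * (A2bᵀ * (𝒜₁ᵀ * Mb * 𝒜₁) * A2b) * 𝒜₃ = Mb := by
    have b2 := base
    rw [hfac] at b2
    simp only [Matrix.transpose_mul, Matrix.mul_assoc] at b2 ⊢
    exact b2
  rw [hS, hT] at hmain
  set N₃ := fromBlocks A₃ B₃ C₃ D₃ with hN3def
  have h3f : 𝒜₃ = fromBlocks 1 0 0 N₃ := by rw [h3e, blk3_shape3_eq]
  have h3Tf : 𝒜₃ᵀ = fromBlocks 1 0 0 N₃ᵀ := by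
    rw [h3f, fromBlocks_transpose]
    simp only [Matrix.transpose_zero, Matrix.transpose_one]
  have hN3d : IsUnit N₃.det := by
    have hd : 𝒜₃.det = N₃.det := by rw [h3f, det_fromBlocks_zero₂₁, det_one, one_mul]
    rwa [hd] at hU3d
  have hN3Td : IsUnit (N₃ᵀ).det := by rw [Matrix.det_transpose]; exact hN3d
  rw [h3Tf, h3f, hMbdef, bdiag_fromBlocks, shape3_congr] at hmain
  rw [fromBlocks_inj] at hmain
  obtain ⟨e1, e2, e3, e4⟩ := hmain
  -- extract the vanishing of sb and sc
  have e2' : fromCols (A₂ᵀ * sb) (A₂ᵀ * sa * B₂ + C₂ᵀ * M₃ * D₂) = 0 := by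
    have h := congrArg (fun Z => Z * N₃⁻¹) e2
    simp only [Matrix.zero_mul] at h
    rwa [Matrix.mul_nonsing_inv_cancel_right _ _ hN3d] at h
  have e3' : fromRows (sc * A₂) (B₂ᵀ * sa * A₂ + D₂ᵀ * M₃ * C₂) = 0 := by
    have h := congrArg (fun Z => (N₃ᵀ)⁻¹ * Z) e3
    simp only [Matrix.mul_zero] at h
    rwa [Matrix.nonsing_inv_mul_cancel_left _ _ hN3Td] at h
  rw [← fromCols_zero] at e2'
  obtain ⟨f1, f2⟩ := fromCols_inj e2'
  rw [← fromRows_zero] at e3'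
  obtain ⟨g1, g2⟩ := fromRows_inj e3'
  have hsb0 : sb = 0 := by
    have h := congrArg (fun Z => (A₂ᵀ)⁻¹ * Z) f1
    simp only [Matrix.mul_zero] at h
    rwa [Matrix.nonsing_inv_mul_cancel_left _ _ hA₂Td] at h
  have hsc0 : sc = 0 := by
    have h := congrArg (fun Z => Z * A₂⁻¹) g1
    simp only [Matrix.zero_mul] at h
    rwa [Matrix.mul_nonsing_inv_cancel_right _ _ hA₂d] at h
  set K := B₂ᵀ * sa * B₂ + D₂ᵀ * M₃ * D₂ with hKdef
  rw [hsb0, hsc0] at e4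
  simp only [Matrix.zero_mul, Matrix.mul_zero] at e4
  -- e4 : N₃ᵀ * fromBlocks sd 0 0 K * N₃ = fromBlocks M₂ 0 0 M₃
  -- symmetry of sa, sd, K
  have hSsym2 : (blk3 sa sb 0 sc sd 0 0 0 M₃)ᵀ = ε • blk3 sa sb 0 sc sd 0 0 0 M₃ := by
    rw [← hS]; exact sandwich_symm ε 𝒜₁ Mb hMsym
  have hTsym2 := sandwich_symm ε A2b (blk3 sa sb 0 sc sd 0 0 0 M₃) hSsym2
  rw [hT] at hTsym2
  rw [blk3_transpose, blk3_smul] at hSsym2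
  obtain ⟨hsas, -, -, -, hsds, -, -, -, -⟩ := blk3_inj_s16 hSsym2
  rw [blk3_transpose, blk3_smul] at hTsym2
  obtain ⟨-, -, -, -, -, -, -, -, hKs⟩ := blk3_inj_s16 hTsym2
  -- invertibility of sa, sd, K
  have hSU : IsUnit (blk3 sa sb 0 sc sd 0 0 0 M₃).det := by
    rw [← hS, Matrix.det_mul, Matrix.det_mul, Matrix.det_transpose]
    exact (hU1d.mul hMbd).mul hU1d
  rw [hsb0, hsc0] at hS hT hSU
  simp only [Matrix.mul_zero, Matrix.zero_mul] at hT
  rw [f2, g2] at hT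
  have hSU' : IsUnit (sa.det * (sd.det * M₃.det)) := by rwa [det_blk3_diag] at hSU
  have hsaU : IsUnit sa :=
    (Matrix.isUnit_iff_isUnit_det _).mpr (isUnit_of_mul_isUnit_left hSU')
  have hsdU : IsUnit sd := (Matrix.isUnit_iff_isUnit_det _).mpr
    (isUnit_of_mul_isUnit_left (isUnit_of_mul_isUnit_right hSU'))
  have hU2Td : IsUnit (A2bᵀ).det := by rw [Matrix.det_transpose]; exact hU2d
  have hTU : IsUnit ((A2bᵀ * blk3 sa 0 0 0 sd 0 0 0 M₃ * A2b).det) := by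
    rw [Matrix.det_mul, Matrix.det_mul]
    exact (hU2Td.mul hSU).mul hU2d
  rw [hT, det_blk3_diag] at hTU
  have hKU : IsUnit K := (Matrix.isUnit_iff_isUnit_det _).mpr
    (isUnit_of_mul_isUnit_right (isUnit_of_mul_isUnit_right hTU))
  -- congruences
  obtain ⟨P₁, Pi₁, hP1a, hP1b, hP1c, hP1d⟩ := congr_exists ε hε2 M₁ sa hM1 hsaU hMs1 hsas
  obtain ⟨P₂, Pi₂, hP2a, hP2b, hP2c, hP2d⟩ := congr_exists ε hε2 M₂ sd hM2 hsdU hMs2 hsds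
  obtain ⟨P₃, Pi₃, hP3a, hP3b, hP3c, hP3d⟩ := congr_exists ε hε2 M₃ K hM3 hKU hMs3 hKs
  set G := bdiag P₁ P₂ (1 : Matrix (Fin r) (Fin r) ℂ) with hGdef
  set Gi := bdiag Pi₁ Pi₂ (1 : Matrix (Fin r) (Fin r) ℂ) with hGidef
  set Qp := bdiag (1 : Matrix (Fin m) (Fin m) ℂ) P₂ P₃ with hQpdef
  set Qi := bdiag (1 : Matrix (Fin m) (Fin m) ℂ) Pi₂ Pi₃ with hQidef
  have hGGi : G * Gi = 1 := by
    rw [hGdef, hGidef, diag_mul_diag, hP1a, hP2a, Matrix.one_mul]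
    exact blk3_one
  have hQpQi : Qp * Qi = 1 := by
    rw [hQpdef, hQidef, diag_mul_diag, hP2a, hP3a, Matrix.one_mul]
    exact blk3_one
  set B1 := 𝒜₁ * G with hB1def
  set B2 := Gi * (A2b * Qp) with hB2def
  set B3 := Qi * 𝒜₃ with hB3def
  have hfac2 : 𝒜 = B1 * B2 * B3 := by
    have c1 : ∀ X, G * (Gi * X) = X := fun X => by
      rw [← Matrix.mul_assoc, hGGi, Matrix.one_mul]
    have c2 : ∀ X, Qp * (Qi * X) = X := fun X => by
      rw [← Matrix.mul_assoc, hQpQi, Matrix.one_mul]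
    rw [hB1def, hB2def, hB3def, hfac]
    simp only [Matrix.mul_assoc]
    rw [c2, c1]
  have hC1 : B1ᵀ * Mb * B1 = Mb := by
    have e : B1ᵀ * Mb * B1 = Gᵀ * (𝒜₁ᵀ * Mb * 𝒜₁) * G := by
      rw [hB1def]; simp only [Matrix.transpose_mul, Matrix.mul_assoc]
    rw [e, hS, hGdef, ← bdiag_eq, bdiag_transpose, diag_mul_diag, diag_mul_diag]
    simp only [Matrix.transpose_one, Matrix.one_mul, Matrix.mul_one]
    rw [hP1c, hP2c, ← hMbdef]
  have hC3 : B3ᵀ * Mb * B3 = Mb := by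
    have e : B3ᵀ * Mb * B3 = 𝒜₃ᵀ * (Qiᵀ * Mb * Qi) * 𝒜₃ := by
      rw [hB3def]; simp only [Matrix.transpose_mul, Matrix.mul_assoc]
    have e2q : Qiᵀ * Mb * Qi = bdiag M₁ sd K := by
      rw [hQidef, hMbdef, bdiag_transpose, diag_mul_diag, diag_mul_diag]
      simp only [Matrix.transpose_one, Matrix.one_mul, Matrix.mul_one]
      rw [hP2d, hP3d]
    rw [e, e2q, h3Tf, h3f, bdiag_fromBlocks, fromBlocks_multiply, fromBlocks_multiply]
    simp only [Matrix.mul_zero, Matrix.zero_mul, Matrix.mul_one, Matrix.one_mul,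
      add_zero, zero_add]
    rw [e4, ← bdiag_fromBlocks, ← hMbdef]
  have hfac2' : 𝒜 = B1 * (B2 * B3) := by rw [hfac2, Matrix.mul_assoc]
  have h23 : (B2 * B3)ᵀ * Mb * (B2 * B3) = Mb :=
    strip_left Mb B1 (B2 * B3) hC1 (by rw [← hfac2']; exact base)
  -- determinant units of the new factors
  have hP1u : IsUnit P₁.det := Matrix.isUnit_det_of_right_inverse hP1a
  have hP2u : IsUnit P₂.det := Matrix.isUnit_det_of_right_inverse hP2a
  have hP3u : IsUnit P₃.det := Matrix.isUnit_det_of_right_inverse hP3a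
  have hPi1u : IsUnit Pi₁.det := Matrix.isUnit_det_of_left_inverse hP1a
  have hPi2u : IsUnit Pi₂.det := Matrix.isUnit_det_of_left_inverse hP2a
  have hPi3u : IsUnit Pi₃.det := Matrix.isUnit_det_of_left_inverse hP3a
  have hGd : IsUnit G.det := by
    rw [hGdef, bdiag_eq, det_blk3_diag, Matrix.det_one]
    exact hP1u.mul (hP2u.mul isUnit_one)
  have hGid : IsUnit Gi.det := by
    rw [hGidef, bdiag_eq, det_blk3_diag, Matrix.det_one]
    exact hPi1u.mul (hPi2u.mul isUnit_one)
  have hQpd : IsUnit Qp.det := by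
    rw [hQpdef, bdiag_eq, det_blk3_diag, Matrix.det_one]
    exact isUnit_one.mul (hP2u.mul hP3u)
  have hQid : IsUnit Qi.det := by
    rw [hQidef, bdiag_eq, det_blk3_diag, Matrix.det_one]
    exact isUnit_one.mul (hPi2u.mul hPi3u)
  have hB1d : IsUnit B1.det := by
    rw [hB1def, Matrix.det_mul]; exact hU1d.mul hGd
  have hB2d : IsUnit B2.det := by
    rw [hB2def, Matrix.det_mul, Matrix.det_mul]; exact hGid.mul (hU2d.mul hQpd)
  have hB3d : IsUnit B3.det := by
    rw [hB3def, Matrix.det_mul]; exact hQid.mul hU3d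
  have hC2 : B2ᵀ * Mb * B2 = Mb := strip_right Mb B2 B3 hC3 hB3d h23
  -- shapes
  have hShape1 : Shape1 B1 := by
    refine ⟨A₁ * P₁, B₁ * P₂, C₁ * P₁, D₁ * P₂, ?_⟩
    rw [hB1def, h1e, hGdef, bdiag_eq, shape1k_mul]
    simp
  have hShape2 : Shape2 B2 := by
    refine ⟨Pi₁ * A₂, Pi₁ * (B₂ * P₃), C₂, D₂ * P₃, ?_⟩
    rw [hB2def, hA2bdef, hQpdef, hGidef, bdiag_eq, bdiag_eq, shape2k_mul, shape2k_mul]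
    simp [hP2b]
  have hShape3 : Shape3 B3 := by
    refine ⟨Pi₂ * A₃, Pi₂ * B₃, Pi₃ * C₃, Pi₃ * D₃, ?_⟩
    rw [hB3def, h3e, hQidef, bdiag_eq, blk3_mul_s16]
    simp
  exact ⟨B1, B2, B3, hShape1, hShape2, hShape3, hfac2,
    cond_of Mb B1 hMbd hB1d hC1, cond_of Mb B2 hMbd hB2d hC2,
    cond_of Mb B3 hMbd hB3d hC3⟩
end
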